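/- arXiv:2512.04930 — 6 statements merged into one kernel-verified Lean document; each statement's English description precedes it below -/
import Mathlib

section
/- Let N ≥ 8 be a natural number and let G be a subgroup of the symmetric group Equiv.Perm (Fin N) whose natural action on Fin N is transitive. Suppose that G contains a transposition (a swap of two distinct elements of Fin N) and that G has a subgroup that is isomorphic as an abstract group to the alternating group on r letters, for some natural number r with 2*r > N. Then G is the whole symmetric group, i.e. G = ⊤. -/
/-!
A primitive permutation group containing a transposition is the full symmetric group (Jordan),
so it suffices to show that `G` is primitive. A nontrivial block of a transitive group of
degree `N` has at most `N / 2` points and at most `N / 2` translates. A simple group of order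
larger than `(N / 2)!` therefore acts trivially on the translates of the block, then on each
translate, hence on all points, which is absurd inside a permutation group. Since `N < 2 * r`,
the alternating group on `r ≥ 5` letters is such a group: it is simple of order
`r! / 2 > (r - 1)! ≥ (N / 2)!`.
-/

open Equiv Equiv.Perm MulAction Nat Pointwise

theorem IsSimpleGroup.eq_one_of_natCard_lt {G K : Type*} [Group G] [IsSimpleGroup G] [Group K]
    [Finite K] (f : G →* K) (hK : Nat.card K < Nat.card G) : f = 1 := by
  rcases IsSimpleGroup.eq_bot_or_eq_top_of_normal f.ker f.normal_ker with hker | hker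
  · exact absurd (Nat.card_le_card_of_injective f ((MonoidHom.ker_eq_bot_iff f).mp hker))
      hK.not_ge
  · exact MonoidHom.ker_eq_top_iff.mp hker

theorem IsSimpleGroup.smul_eq_self_of_factorial_lt {H β : Type*} [Group H] [IsSimpleGroup H]
    [MulAction H β] [Finite β] (hβ : (Nat.card β)! < Nat.card H) (h : H) (b : β) :
    h • b = b := by
  have hf := IsSimpleGroup.eq_one_of_natCard_lt (toPermHom H β) (by rwa [Nat.card_perm])
  exact DFunLike.congr_fun (DFunLike.congr_fun hf h) b

theorem factorial_pred_lt_natCard_alternatingGroup {r : ℕ} (hr : 3 ≤ r) :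
    (r - 1)! < Nat.card (alternatingGroup (Fin r)) := by
  have : Nontrivial (Fin r) := Fin.nontrivial_iff_two_le.mpr (by omega)
  have h2 := two_mul_nat_card_alternatingGroup (α := Fin r)
  rw [Nat.card_perm, Nat.card_fin] at h2
  obtain ⟨k, rfl⟩ : ∃ k, r = k + 1 := ⟨r - 1, by omega⟩
  rw [Nat.factorial_succ] at h2
  rw [Nat.add_sub_cancel]
  nlinarith [Nat.factorial_pos k]

namespace MulAction

variable {G X : Type*} [Group G] [MulAction G X] [Finite X] [IsPretransitive G X]
  [FaithfulSMul G X] (H : Subgroup G) [IsSimpleGroup H]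

theorem IsBlock.isTrivialBlock_of_isSimpleGroup (hH : (Nat.card X / 2)! < Nat.card H)
    {B : Set X} (hB : IsBlock G B) : IsTrivialBlock B := by
  by_contra hnt
  obtain ⟨hsub, hne⟩ := not_or.mp hnt
  obtain ⟨b, hb⟩ := (Set.not_subsingleton_iff.mp hsub).nonempty
  have hB_le : B.ncard ≤ Nat.card X / 2 := by
    by_contra! h
    exact hne (hB.eq_univ_of_card_lt (by omega))
  have horbit_le : (orbit G B).ncard ≤ Nat.card X / 2 := by
    by_contra! h
    exact hsub (hB.subsingleton_of_card_lt (by omega))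
  have hfix_translate (h : H) (g : G) : (h : G) • g • B = g • B :=
    congrArg Subtype.val <| IsSimpleGroup.smul_eq_self_of_factorial_lt (β := orbit G B)
      ((Nat.factorial_le (by rwa [Nat.card_coe_set_eq])).trans_lt hH) h ⟨g • B, mem_orbit B g⟩
  have hfix_point (h : H) (x : X) : h • x = x := by
    obtain ⟨g, rfl⟩ := exists_smul_eq G b x
    let C : SubMulAction H X := ⟨g • B, fun h y hy => by
      rw [← hfix_translate h g]; exact Set.smul_mem_smul_set hy⟩
    have hC : Nat.card C ≤ Nat.card X / 2 := by
      rwa [show Nat.card C = (g • B).ncard from Nat.card_coe_set_eq _, Set.ncard_smul_set]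
    exact congrArg Subtype.val <| IsSimpleGroup.smul_eq_self_of_factorial_lt
      ((Nat.factorial_le hC).trans_lt hH) h ⟨g • b, Set.smul_mem_smul_set hb⟩
  obtain ⟨h, hh⟩ := exists_ne (1 : H)
  exact hh (eq_of_smul_eq_smul fun x => by rw [hfix_point, one_smul])

theorem isPreprimitive_of_isSimpleGroup (hH : (Nat.card X / 2)! < Nat.card H) :
    IsPreprimitive G X where
  isTrivialBlock_of_isBlock := IsBlock.isTrivialBlock_of_isSimpleGroup H hH

end MulAction

/-- If `N ≥ 8`, `G ≤ Perm (Fin N)` is transitive, contains a transposition,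
and contains (a subgroup isomorphic to) the alternating group on `r` letters with
`2 * r > N`, then `G = ⊤`. -/
theorem stmt_0 (N : ℕ) (hN : 8 ≤ N) (G : Subgroup (Equiv.Perm (Fin N)))
    (htrans : ∀ x y : Fin N, ∃ g ∈ G, g x = y)
    (htransp : ∃ g ∈ G, Equiv.Perm.IsSwap g)
    (r : ℕ) (hr : 2 * r > N)
    (hA : ∃ H : Subgroup G, Nonempty (H ≃* alternatingGroup (Fin r))) :
    G = ⊤ := by
  obtain ⟨H, ⟨e⟩⟩ := hA
  obtain ⟨σ, hσG, hσ⟩ := htransp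
  have : IsSimpleGroup (alternatingGroup (Fin r)) :=
    alternatingGroup.isSimpleGroup (by rw [Nat.card_fin]; omega)
  have : IsSimpleGroup H := e.isSimpleGroup
  have : IsPretransitive G (Fin N) :=
    ⟨fun x y => let ⟨g, hg, hgx⟩ := htrans x y; ⟨⟨g, hg⟩, hgx⟩⟩
  have hH : (Nat.card (Fin N) / 2)! < Nat.card H := calc
    (Nat.card (Fin N) / 2)! ≤ (r - 1)! := Nat.factorial_le (by rw [Nat.card_fin]; omega)
    _ < Nat.card (alternatingGroup (Fin r)) := factorial_pred_lt_natCard_alternatingGroup (by omega)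
    _ = Nat.card H := (Nat.card_congr e.toEquiv).symm
  exact subgroup_eq_top_of_isPreprimitive_of_isSwap_mem (isPreprimitive_of_isSimpleGroup H hH)
    σ hσ hσG
end

section
/- Let N ≥ 2 and let G be a subgroup of Equiv.Perm (Fin N) whose action on Fin N is transitive and which contains a transposition. Then there exists a natural number n ≥ 2 and a partition of Fin N into blocks, each block of cardinality exactly n, such that: (i) the partition is G-invariant, i.e. for every g ∈ G the image of each block under g is again a block; (ii) every permutation of Fin N whose support is contained in a single block belongs to G; and (iii) G acts transitively on the set of blocks. -/
/-!
The blocks are the classes of the relation `x ~ y ↔ swap x y ∈ G`, which is an equivalence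
relation because the conjugate of `swap y z` by `swap x y` is `swap x z`. Since
`g * swap x y * g⁻¹ = swap (g x) (g y)`, every `g ∈ G` maps classes to classes, so transitivity
of `G` makes all classes equally large and permuted transitively; the class of a transposition of
`G` has at least two points. A permutation supported in one class is a product of transpositions
`swap x (σ x)` with `x ~ σ x`, hence lies in `G`.
-/

open Equiv Set

namespace Equiv.Perm

variable {α : Type*} [DecidableEq α] (G : Subgroup (Perm α))

theorem swap_apply_mem_iff {g : Perm α} (hg : g ∈ G) (x y : α) :
    swap (g x) (g y) ∈ G ↔ swap x y ∈ G := by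
  rw [swap_apply_apply, G.mul_mem_cancel_right (G.inv_mem hg), G.mul_mem_cancel_left hg]

theorem mem_of_forall_swap_apply_mem {σ : Perm α} (hσ : (MulAction.fixedBy α σ)ᶜ.Finite)
    (h : ∀ x, swap (σ x) x ∈ G) : σ ∈ G := by
  set S := {τ : Perm α | τ ∈ G ∧ τ.IsSwap}
  have hS : ∀ τ ∈ S, τ.IsSwap := fun τ hτ => hτ.2
  have hswap : ∀ x, swap (σ x) x ∈ Subgroup.closure S := fun x => by
    by_cases hx : σ x = x
    · rw [hx, swap_self]
      exact Subgroup.one_mem _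
    · exact Subgroup.subset_closure ⟨h x, σ x, x, hx, rfl⟩
  have hle : Subgroup.closure S ≤ G := (Subgroup.closure_le G).2 fun _ hτ => hτ.1
  exact hle <| (mem_closure_isSwap hS).2 ⟨hσ, fun x => (swap_mem_closure_isSwap hS).1 (hswap x)⟩

def swapSetoid : Setoid α where
  r x y := swap x y ∈ G
  iseqv :=
    { refl := fun x => by rw [swap_self]; exact G.one_mem
      symm := fun h => by rwa [swap_comm]
      trans := fun hxy hyz => SubmonoidClass.swap_mem_trans G hxy hyz }

theorem swapSetoid_iff {x y : α} : swapSetoid G x y ↔ swap x y ∈ G := Iff.rfl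

theorem image_setOf_swapSetoid {g : Perm α} (hg : g ∈ G) (y : α) :
    g '' {x | swapSetoid G x y} = {x | swapSetoid G x (g y)} := by
  ext x
  rw [mem_image_equiv, mem_ofPred_eq, mem_ofPred_eq, swapSetoid_iff, swapSetoid_iff,
    ← swap_apply_mem_iff G hg, apply_symm_apply]

theorem mem_of_support_subset_mem_classes {σ : Perm α} (hσ : (MulAction.fixedBy α σ)ᶜ.Finite)
    {b : Set α} (hb : b ∈ (swapSetoid G).classes) (hσb : {x | σ x ≠ x} ⊆ b) : σ ∈ G := by
  obtain ⟨y, rfl⟩ := hb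
  refine mem_of_forall_swap_apply_mem G hσ fun x => ?_
  by_cases hx : σ x = x
  · rw [hx]
    exact (swapSetoid G).refl x
  · have hσx : σ (σ x) ≠ σ x := fun h => hx (σ.injective h)
    exact (swapSetoid G).trans (hσb hσx) ((swapSetoid G).symm (hσb hx))

variable {G}

theorem ncard_setOf_swapSetoid_eq (htrans : ∀ x y : α, ∃ g ∈ G, g x = y) (y z : α) :
    {x | swapSetoid G x y}.ncard = {x | swapSetoid G x z}.ncard := by
  obtain ⟨g, hg, rfl⟩ := htrans y z
  rw [← image_setOf_swapSetoid G hg, ncard_image_of_injective _ g.injective]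

theorem two_le_ncard_setOf_swapSetoid [Finite α] {a b : α} (hab : a ≠ b) (h : swap a b ∈ G) :
    2 ≤ {x | swapSetoid G x b}.ncard := by
  have hpair : ({a, b} : Set α) ⊆ {x | swapSetoid G x b} := by
    rintro x (rfl | rfl)
    · exact h
    · exact (swapSetoid G).refl x
  exact (ncard_pair hab).symm.le.trans (ncard_le_ncard hpair)

end Equiv.Perm

theorem stmt_1_general (N : ℕ) (G : Subgroup (Equiv.Perm (Fin N)))
    (htrans : ∀ x y : Fin N, ∃ g ∈ G, g x = y)
    (htransp : ∃ g ∈ G, Equiv.Perm.IsSwap g) :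
    ∃ (n : ℕ), 2 ≤ n ∧ ∃ P : Set (Set (Fin N)),
      -- `P` is a partition of `Fin N`
      (∀ x : Fin N, ∃! b, b ∈ P ∧ x ∈ b) ∧
      -- each block has cardinality exactly `n`
      (∀ b ∈ P, b.ncard = n) ∧
      -- (i) the partition is `G`-invariant
      (∀ g ∈ G, ∀ b ∈ P, (g : Equiv.Perm (Fin N)) '' b ∈ P) ∧
      -- (ii) every permutation supported in a single block belongs to `G`
      (∀ σ : Equiv.Perm (Fin N), (∃ b ∈ P, {x | σ x ≠ x} ⊆ b) → σ ∈ G) ∧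
      -- (iii) `G` acts transitively on the blocks
      (∀ b ∈ P, ∀ b' ∈ P, ∃ g ∈ G, (g : Equiv.Perm (Fin N)) '' b = b') := by
  obtain ⟨-, hswap, a, b, hab, rfl⟩ := htransp
  refine ⟨_, Perm.two_le_ncard_setOf_swapSetoid hab hswap, (Perm.swapSetoid G).classes,
    Setoid.classes_eqv_classes, ?_, ?_, ?_, ?_⟩
  · rintro _ ⟨y, rfl⟩
    exact Perm.ncard_setOf_swapSetoid_eq htrans y b
  · rintro g hg _ ⟨y, rfl⟩
    exact ⟨g y, Perm.image_setOf_swapSetoid G hg y⟩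
  · rintro σ ⟨c, hc, hσc⟩
    exact Perm.mem_of_support_subset_mem_classes G (toFinite _) hc hσc
  · rintro _ ⟨y, rfl⟩ _ ⟨z, rfl⟩
    obtain ⟨g, hg, rfl⟩ := htrans y z
    exact ⟨g, hg, Perm.image_setOf_swapSetoid G hg y⟩

/-- A transitive subgroup of `Perm (Fin N)` (with `N ≥ 2`) containing a
transposition is a wreath product `𝔖ₙ ≀ K`: there is a `G`-invariant partition of
`Fin N` into blocks of some common size `n ≥ 2` such that every permutation supported
in a single block lies in `G`, and `G` permutes the blocks transitively. -/
theorem stmt_1 (N : ℕ) (hN : 2 ≤ N) (G : Subgroup (Equiv.Perm (Fin N)))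
    (htrans : ∀ x y : Fin N, ∃ g ∈ G, g x = y)
    (htransp : ∃ g ∈ G, Equiv.Perm.IsSwap g) :
    ∃ (n : ℕ), 2 ≤ n ∧ ∃ P : Set (Set (Fin N)),
      -- `P` is a partition of `Fin N`
      (∀ x : Fin N, ∃! b, b ∈ P ∧ x ∈ b) ∧
      -- each block has cardinality exactly `n`
      (∀ b ∈ P, b.ncard = n) ∧
      -- (i) the partition is `G`-invariant
      (∀ g ∈ G, ∀ b ∈ P, (g : Equiv.Perm (Fin N)) '' b ∈ P) ∧
      -- (ii) every permutation supported in a single block belongs to `G`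
      (∀ σ : Equiv.Perm (Fin N), (∃ b ∈ P, {x | σ x ≠ x} ⊆ b) → σ ∈ G) ∧
      -- (iii) `G` acts transitively on the blocks
      (∀ b ∈ P, ∀ b' ∈ P, ∃ g ∈ G, (g : Equiv.Perm (Fin N)) '' b = b') :=
  stmt_1_general N G htrans htransp
end

section
/- Let r ≥ 5 and let k < r be natural numbers. Then every group homomorphism from the alternating group alternatingGroup (Fin r) to the symmetric group Equiv.Perm (Fin k) is trivial, i.e. sends every element to the identity. -/
/-!
The kernel of `φ` is a normal subgroup of the simple group `A_r`. It cannot be trivial,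
since `|A_r| = r!/2 > (r-1)! ≥ k! = |S_k|`, so it is everything.
-/

open Equiv Equiv.Perm

theorem MonoidHom.eq_one_of_card_lt {G H : Type*} [Group G] [Group H] [IsSimpleGroup G]
    [Finite H] (φ : G →* H) (hcard : Nat.card H < Nat.card G) : φ = 1 := by
  refine MonoidHom.ker_eq_top_iff.mp <|
    φ.normal_ker.eq_bot_or_eq_top.resolve_left fun hbot => ?_
  have hinj : Function.Injective φ := (MonoidHom.ker_eq_bot_iff φ).mp hbot
  exact (Nat.card_le_card_of_injective φ hinj).not_gt hcard

theorem nat_card_perm_lt_nat_card_alternatingGroup {α β : Type*} [Fintype α] [DecidableEq α]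
    [Finite β] (hα : 3 ≤ Nat.card α) (hβα : Nat.card β < Nat.card α) :
    Nat.card (Perm β) < Nat.card (alternatingGroup α) := by
  have : Nontrivial α := Finite.one_lt_card_iff_nontrivial.mp (by omega)
  have hdouble := two_mul_nat_card_alternatingGroup (α := α)
  rw [Nat.card_perm] at hdouble ⊢
  set n := Nat.card α
  have hfact : (Nat.card β).factorial ≤ (n - 1).factorial := Nat.factorial_le (by omega)
  have hsucc : n * (n - 1).factorial = n.factorial := Nat.mul_factorial_pred (by omega)
  nlinarith [Nat.factorial_pos (n - 1)]

/-- For `r ≥ 5` and `k < r`, every homomorphism from the alternating group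
on `r` letters to the symmetric group on `k` letters is trivial. -/
theorem stmt_3 (r k : ℕ) (hr : 5 ≤ r) (hk : k < r)
    (φ : alternatingGroup (Fin r) →* Equiv.Perm (Fin k)) :
    ∀ x, φ x = 1 := by
  have : IsSimpleGroup (alternatingGroup (Fin r)) :=
    alternatingGroup.isSimpleGroup (by simpa using hr)
  have hcard : Nat.card (Perm (Fin k)) < Nat.card (alternatingGroup (Fin r)) :=
    nat_card_perm_lt_nat_card_alternatingGroup (by rw [Nat.card_fin]; omega) (by simpa using hk)
  intro x
  rw [φ.eq_one_of_card_lt hcard, MonoidHom.one_apply]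
end

section
/- Let r ≥ 5 and let n < r be natural numbers. Then there is no injective group homomorphism from the alternating group alternatingGroup (Fin r) into the symmetric group Equiv.Perm (Fin n). -/
/-- For `r ≥ 5` and `n < r` there is no injective homomorphism from the
alternating group on `r` letters into the symmetric group on `n` letters. -/
theorem stmt_4 (r n : ℕ) (hr : 5 ≤ r) (hn : n < r) :
    ¬ ∃ φ : alternatingGroup (Fin r) →* Equiv.Perm (Fin n), Function.Injective φ := by
  rintro ⟨φ, hφ⟩
  have hcard := Fintype.card_le_of_injective φ hφ
  rw [Fintype.card_perm, Fintype.card_fin] at hcard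
  haveI : Nontrivial (Fin r) := ⟨⟨⟨0, by omega⟩, ⟨1, by omega⟩, by simp [Fin.ext_iff]⟩⟩
  have h2 : 2 * Fintype.card (alternatingGroup (Fin r)) = Nat.factorial r := by
    have := two_mul_card_alternatingGroup (α := Fin r)
    simpa [Fintype.card_perm, Fintype.card_fin] using this
  have hle : Nat.factorial n ≤ Nat.factorial (r - 1) :=
    Nat.factorial_le (by omega)
  have hfac : Nat.factorial r = r * Nat.factorial (r - 1) := by
    conv_lhs => rw [show r = (r - 1) + 1 by omega]
    rw [Nat.factorial_succ]
    congr 1; omega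
  have hpos : 0 < Nat.factorial (r - 1) := Nat.factorial_pos _
  nlinarith [Nat.factorial_pos n]
end

section
/- Fix N ≥ 1 and equip the space Fin N → ℂ with the ℂ-bilinear form B x y = ∑ k, (x k) * (y k). Let U be an open subset of ℂ^N (i.e. of EuclideanSpace ℂ (Fin N) or Fin N → ℂ) and let η : Fin N → U → (Fin N → ℂ) be a family of maps, each differentiable on U, such that for all t ∈ U and all indices a, b one has B(η a t, η b t) = (if a = b then 1 else 0), and such that for all indices i ≠ j and all t ∈ U the partial derivative ∂ᵢ(η j)(t) (the derivative of η j at t in the i-th coordinate direction) is a scalar multiple of η i t. Then for all indices i, j and all t ∈ U one has ∂ᵢ(η j)(t) = B(η i t, η j t) • ∂ᵢ(η i)(t) − B(∂ᵢ(η i)(t), η j t) • η i t; that is, ∂ᵢ(η j) = (∂ᵢη i ∧ η i).(η j), where (x ∧ y).z = B(y, z) • x − B(x, z) • y. -/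
/-!
Differentiating `B (η a) (η b) = δ_ab` along `eᵢ` gives
`B (∂ᵢ η a) (η b) + B (η a) (∂ᵢ η b) = 0`. For `j = i` this forces `B (∂ᵢ η i) (η i) = 0`, which
is the claim because `B (η i) (η i) = 1`. For `j ≠ i` write `∂ᵢ η j = c • η i`: pairing with `η i`
gives `c = B (η i) (∂ᵢ η j) = -B (∂ᵢ η i) (η j)`, and `B (η i) (η j) = 0` kills the other term.
-/

open Filter Topology

/-- `(x ∧ y).z` -/
def wedgeContract {ι R : Type*} [Fintype ι] [CommRing R] (x y z : ι → R) : ι → R :=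
  (y ⬝ᵥ z) • x - (x ⬝ᵥ z) • y

section Algebra

variable {ι R : Type*} [Fintype ι]

theorem eq_wedgeContract_self_of_dotProduct_add_eq_zero [Field R] [NeZero (2 : R)]
    {d e : ι → R} (hee : e ⬝ᵥ e = 1) (hde : d ⬝ᵥ e + e ⬝ᵥ d = 0) :
    d = wedgeContract d e e := by
  have hde' : d ⬝ᵥ e = 0 := by
    rw [dotProduct_comm e d, ← two_mul] at hde
    exact (mul_eq_zero.mp hde).resolve_left two_ne_zero
  simp [wedgeContract, hee, hde']

theorem eq_wedgeContract_of_eq_smul [CommRing R] {d d' e f : ι → R} {c : R}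
    (hee : e ⬝ᵥ e = 1) (hef : e ⬝ᵥ f = 0) (hdd' : d ⬝ᵥ f + e ⬝ᵥ d' = 0) (hd' : d' = c • e) :
    d' = wedgeContract d e f := by
  have hc : c = -(d ⬝ᵥ f) := by
    rw [hd', dotProduct_smul, hee, smul_eq_mul, mul_one] at hdd'
    linear_combination hdd'
  simp [wedgeContract, hd', hc, hef]

end Algebra

section Calculus

variable {ι 𝕜 E : Type*} [Fintype ι] [NontriviallyNormedField 𝕜]

theorem HasDerivAt.dotProduct {f g : 𝕜 → ι → 𝕜} {f' g' : ι → 𝕜} {x : 𝕜}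
    (hf : HasDerivAt f f' x) (hg : HasDerivAt g g' x) :
    HasDerivAt (fun y ↦ f y ⬝ᵥ g y) (f' ⬝ᵥ g x + f x ⬝ᵥ g') x := by
  have hk : ∀ k ∈ Finset.univ,
      HasDerivAt (fun y ↦ f y k * g y k) (f' k * g x k + f x k * g' k) x :=
    fun k _ ↦ (hasDerivAt_pi.mp hf k).mul (hasDerivAt_pi.mp hg k)
  simpa only [_root_.dotProduct, Finset.sum_add_distrib] using HasDerivAt.fun_sum hk

variable [AddCommGroup E] [Module 𝕜 E]

theorem HasLineDerivAt.dotProduct {f g : E → ι → 𝕜} {f' g' : ι → 𝕜} {x v : E}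
    (hf : HasLineDerivAt 𝕜 f f' x v) (hg : HasLineDerivAt 𝕜 g g' x v) :
    HasLineDerivAt 𝕜 (fun y ↦ f y ⬝ᵥ g y) (f' ⬝ᵥ g x + f x ⬝ᵥ g') x v := by
  simpa only [HasLineDerivAt, zero_smul, add_zero] using HasDerivAt.dotProduct hf hg

theorem lineDeriv_dotProduct_add_eq_zero {F : Type*} [NormedAddCommGroup F] [NormedSpace 𝕜 F]
    {f g : F → ι → 𝕜} {x v : F} {c : 𝕜}
    (hf : LineDifferentiableAt 𝕜 f x v) (hg : LineDifferentiableAt 𝕜 g x v)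
    (hc : (fun y ↦ f y ⬝ᵥ g y) =ᶠ[𝓝 x] fun _ ↦ c) :
    lineDeriv 𝕜 f x v ⬝ᵥ g x + f x ⬝ᵥ lineDeriv 𝕜 g x v = 0 :=
  (hc.hasLineDerivAt_iff.mpr (hasDerivAt_const 0 c)).unique
    (hf.hasLineDerivAt.dotProduct hg.hasLineDerivAt) |>.symm

end Calculus

theorem stmt_6_general (N : ℕ) (U : Set (Fin N → ℂ)) (hU : IsOpen U)
    (η : Fin N → (Fin N → ℂ) → (Fin N → ℂ))
    (hdiff : ∀ a : Fin N, DifferentiableOn ℂ (η a) U)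
    (horth : ∀ t ∈ U, ∀ a b : Fin N,
      (∑ k, η a t k * η b t k) = if a = b then (1 : ℂ) else 0)
    (hprop : ∀ i j : Fin N, i ≠ j → ∀ t ∈ U,
      ∃ c : ℂ, lineDeriv ℂ (η j) t (Pi.single i 1) = c • η i t) :
    ∀ i j : Fin N, ∀ t ∈ U,
      lineDeriv ℂ (η j) t (Pi.single i 1) =
        (∑ k, η i t k * η j t k) • lineDeriv ℂ (η i) t (Pi.single i 1) -
          (∑ k, lineDeriv ℂ (η i) t (Pi.single i 1) k * η j t k) • η i t := by
  intro i j t ht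
  have hdiffAt (a : Fin N) : LineDifferentiableAt ℂ (η a) t (Pi.single i 1) :=
    ((hdiff a).differentiableAt (hU.mem_nhds ht)).lineDifferentiableAt
  have hderiv (a b : Fin N) := lineDeriv_dotProduct_add_eq_zero (hdiffAt a) (hdiffAt b)
    (eventually_of_mem (hU.mem_nhds ht) fun s hs ↦ horth s hs a b)
  have hii : η i t ⬝ᵥ η i t = 1 := (horth t ht i i).trans (if_pos rfl)
  change _ = wedgeContract _ (η i t) (η j t)
  rcases eq_or_ne i j with rfl | hij
  · exact eq_wedgeContract_self_of_dotProduct_add_eq_zero hii (hderiv i i)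
  · obtain ⟨c, hc⟩ := hprop i j hij t ht
    exact eq_wedgeContract_of_eq_smul hii ((horth t ht i j).trans (if_neg hij)) (hderiv i j) hc

/-- Let `η a : ℂ^N → ℂ^N`, `a ∈ Fin N`, be maps differentiable on an open
set `U`, orthonormal at each `t ∈ U` with respect to the bilinear dot product
`B x y = ∑ k, x k * y k`, and suppose that for `i ≠ j` the partial derivative
`∂ᵢ (η j) (t)` is proportional to `η i t`.  Then for all `i, j` and `t ∈ U`:
`∂ᵢ(η j)(t) = B(η i t, η j t) • ∂ᵢ(η i)(t) − B(∂ᵢ(η i)(t), η j t) • η i t`,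
i.e. `∂ᵢ(η j) = (∂ᵢ η i ∧ η i).(η j)`. -/
theorem stmt_6 (N : ℕ) (hN : 1 ≤ N) (U : Set (Fin N → ℂ)) (hU : IsOpen U)
    (η : Fin N → (Fin N → ℂ) → (Fin N → ℂ))
    (hdiff : ∀ a : Fin N, DifferentiableOn ℂ (η a) U)
    (horth : ∀ t ∈ U, ∀ a b : Fin N,
      (∑ k, η a t k * η b t k) = if a = b then (1 : ℂ) else 0)
    (hprop : ∀ i j : Fin N, i ≠ j → ∀ t ∈ U,
      ∃ c : ℂ, lineDeriv ℂ (η j) t (Pi.single i 1) = c • η i t) :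
    ∀ i j : Fin N, ∀ t ∈ U,
      lineDeriv ℂ (η j) t (Pi.single i 1) =
        (∑ k, η i t k * η j t k) • lineDeriv ℂ (η i) t (Pi.single i 1) -
          (∑ k, lineDeriv ℂ (η i) t (Pi.single i 1) k * η j t k) • η i t :=
  stmt_6_general N U hU η hdiff horth hprop
end

section
/- Fix N ≥ 1 and an index i : Fin N. Let U be an open subset of ℂ^N and let H : U → Matrix (Fin N) (Fin N) ℂ be differentiable on U, with (H t)ᵀ * (H t) = 1 (the identity matrix) for every t ∈ U; thus the columns η₁ t, …, η_N t of H t are orthonormal with respect to the bilinear form B x y = ∑ k, (x k) * (y k). Suppose that for every index j ≠ i and every t ∈ U, the i-th partial derivative ∂ᵢ(η j)(t) of the j-th column of H is a scalar multiple of the i-th column η i t. Then for every t ∈ U one has the matrix identity ∂ᵢH(t) = A(t) * H(t), where A(t) is the N × N matrix with entries A(t)ₖₗ = (∂ᵢ(η i)(t))ₖ * (η i t)ₗ − (η i t)ₖ * (∂ᵢ(η i)(t))ₗ (that is, A = u' uᵀ − u u'ᵀ with u the i-th column of H and u' its i-th partial derivative). -/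
/-!
Differentiating `Hᵀ H = 1` along `eᵢ` shows that `Hᵀ ∂ᵢH` is skew-symmetric, i.e.
`B(∂ᵢη_j, η_l) = −B(η_j, ∂ᵢη_l)`; in particular `B(∂ᵢηᵢ, ηᵢ) = 0`.
Hence the skew matrix `A = ∂ᵢηᵢ ηᵢᵀ − ηᵢ ∂ᵢηᵢᵀ` sends `ηᵢ` to `∂ᵢηᵢ`,
and it sends `η_l` (`l ≠ i`) to `−B(∂ᵢηᵢ, η_l) ηᵢ = B(ηᵢ, ∂ᵢη_l) ηᵢ`, which is `∂ᵢη_l`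
exactly because `∂ᵢη_l` is a multiple of the unit vector `ηᵢ`.
-/

open Matrix Filter Topology

namespace Matrix

variable {n R : Type*} [Fintype n] [CommRing R]

def wedge (u v : n → R) : Matrix n n R :=
  vecMulVec u v - vecMulVec v u

theorem wedge_mulVec (u v w : n → R) : wedge u v *ᵥ w = (v ⬝ᵥ w) • u - (u ⬝ᵥ w) • v := by
  simp [wedge, sub_mulVec, vecMulVec_mulVec]

theorem eq_wedge_mul_of_transpose_mul_add_eq_zero [DecidableEq n] [IsAddTorsionFree R]
    {H D : Matrix n n R} (i : n) (horth : Hᵀ * H = 1) (hskew : Dᵀ * H + Hᵀ * D = 0)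
    (hprop : ∀ j ≠ i, ∃ c : R, Dᵀ j = c • Hᵀ i) :
    D = wedge (Dᵀ i) (Hᵀ i) * H := by
  have hdot : ∀ j l, Hᵀ j ⬝ᵥ Hᵀ l = (1 : Matrix n n R) j l := fun j l =>
    congrFun (congrFun horth j) l
  have hskew_dot : ∀ j l, Dᵀ j ⬝ᵥ Hᵀ l = -(Hᵀ j ⬝ᵥ Dᵀ l) := fun j l =>
    eq_neg_of_add_eq_zero_left (congrFun (congrFun hskew j) l)
  have hii : Dᵀ i ⬝ᵥ Hᵀ i = 0 := by
    have h := hskew_dot i i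
    rw [dotProduct_comm (Hᵀ i)] at h
    exact self_eq_neg.mp h
  suffices hcol : ∀ l, Dᵀ l = wedge (Dᵀ i) (Hᵀ i) *ᵥ Hᵀ l by
    ext k l
    exact congrFun (hcol l) k
  intro l
  rw [wedge_mulVec]
  by_cases hl : l = i
  · subst hl
    simp [hdot, hii]
  · obtain ⟨c, hc⟩ := hprop l hl
    simp [hdot, hskew_dot, hc, Ne.symm hl]

end Matrix

section LineDeriv

variable {𝕜 E ι : Type*} [NontriviallyNormedField 𝕜] [NormedAddCommGroup E] [NormedSpace 𝕜 E]

noncomputable def lineDerivMatrix {m n : Type*} (H : E → Matrix m n 𝕜) (t v : E) : Matrix m n 𝕜 :=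
  of fun k l => lineDeriv 𝕜 (fun s => H s k l) t v

theorem hasLineDerivAt_dotProduct [Fintype ι] {f g : E → ι → 𝕜} {t v : E}
    (hf : ∀ m, LineDifferentiableAt 𝕜 (fun s => f s m) t v)
    (hg : ∀ m, LineDifferentiableAt 𝕜 (fun s => g s m) t v) :
    HasLineDerivAt 𝕜 (fun s => f s ⬝ᵥ g s)
      ((fun m => lineDeriv 𝕜 (fun s => f s m) t v) ⬝ᵥ g t +
        f t ⬝ᵥ fun m => lineDeriv 𝕜 (fun s => g s m) t v) t v := by
  have := HasDerivAt.fun_sum (u := Finset.univ) fun m _ =>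
    (hf m).hasLineDerivAt.mul (hg m).hasLineDerivAt
  simpa [HasLineDerivAt, dotProduct, Finset.sum_add_distrib] using this

theorem transpose_lineDerivMatrix_mul_add_eq_zero {m n : Type*} [Fintype m]
    {H : E → Matrix m n 𝕜} {C : Matrix n n 𝕜} {t v : E}
    (hH : ∀ k l, LineDifferentiableAt 𝕜 (fun s => H s k l) t v)
    (hconst : ∀ᶠ s in 𝓝 t, (H s)ᵀ * H s = C) :
    (lineDerivMatrix H t v)ᵀ * H t + (H t)ᵀ * lineDerivMatrix H t v = 0 := by
  ext j l
  have hprod : HasLineDerivAt 𝕜 (fun s => (H s)ᵀ j ⬝ᵥ (H s)ᵀ l)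
      (((lineDerivMatrix H t v)ᵀ * H t + (H t)ᵀ * lineDerivMatrix H t v) j l) t v :=
    hasLineDerivAt_dotProduct (fun k => hH k j) (fun k => hH k l)
  have hzero : HasLineDerivAt 𝕜 (fun s => (H s)ᵀ j ⬝ᵥ (H s)ᵀ l) 0 t v := by
    refine ((hasFDerivAt_const (C j l) t).hasLineDerivAt v).congr_of_eventuallyEq ?_
    filter_upwards [hconst] with s hs
    exact congrFun (congrFun hs j) l
  exact hprod.unique hzero

end LineDeriv

theorem stmt_7_general (N : ℕ) (i : Fin N) (U : Set (Fin N → ℂ)) (hU : IsOpen U)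
    (H : (Fin N → ℂ) → Matrix (Fin N) (Fin N) ℂ)
    (hdiff : ∀ k l : Fin N, DifferentiableOn ℂ (fun t => H t k l) U)
    (horth : ∀ t ∈ U, (H t)ᵀ * H t = 1)
    (hprop : ∀ j : Fin N, j ≠ i → ∀ t ∈ U,
      ∃ c : ℂ, (fun k => lineDeriv ℂ (fun s => H s k j) t (Pi.single i 1)) =
        c • fun k => H t k i) :
    ∀ t ∈ U,
      (Matrix.of fun k l => lineDeriv ℂ (fun s => H s k l) t (Pi.single i 1)) =
        (Matrix.of fun k l =>
            lineDeriv ℂ (fun s => H s k i) t (Pi.single i 1) * H t l i -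
              H t k i * lineDeriv ℂ (fun s => H s l i) t (Pi.single i 1)) * H t := by
  intro t ht
  have hnhds : U ∈ 𝓝 t := hU.mem_nhds ht
  have hskew := transpose_lineDerivMatrix_mul_add_eq_zero (v := Pi.single i 1)
    (fun k l => ((hdiff k l).differentiableAt hnhds).lineDifferentiableAt)
    (eventually_of_mem hnhds horth)
  have hwedge := eq_wedge_mul_of_transpose_mul_add_eq_zero i (horth t ht) hskew
    fun j hj => hprop j hj t ht
  refine hwedge.trans (congrArg (· * H t) ?_)
  ext k l
  simp [wedge, vecMulVec, lineDerivMatrix]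

/-- Let `H : ℂ^N → O_N(ℂ)` be differentiable on an open set `U` with
`(H t)ᵀ * H t = 1`, and suppose that for every `j ≠ i` the `i`-th partial derivative of
the `j`-th column of `H` is proportional to the `i`-th column.  Then
`∂ᵢ H (t) = A(t) * H(t)` where `A = u' uᵀ − u u'ᵀ`, `u` being the `i`-th column of `H`
and `u'` its `i`-th partial derivative; i.e. `H` satisfies the ecliptic pde
`∂ᵢ H = (∂ᵢ ηᵢ ∧ ηᵢ) H`. -/
theorem stmt_7 (N : ℕ) (hN : 1 ≤ N) (i : Fin N) (U : Set (Fin N → ℂ)) (hU : IsOpen U)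
    (H : (Fin N → ℂ) → Matrix (Fin N) (Fin N) ℂ)
    (hdiff : ∀ k l : Fin N, DifferentiableOn ℂ (fun t => H t k l) U)
    (horth : ∀ t ∈ U, (H t)ᵀ * H t = 1)
    (hprop : ∀ j : Fin N, j ≠ i → ∀ t ∈ U,
      ∃ c : ℂ, (fun k => lineDeriv ℂ (fun s => H s k j) t (Pi.single i 1)) =
        c • fun k => H t k i) :
    ∀ t ∈ U,
      (Matrix.of fun k l => lineDeriv ℂ (fun s => H s k l) t (Pi.single i 1)) =
        (Matrix.of fun k l =>
            lineDeriv ℂ (fun s => H s k i) t (Pi.single i 1) * H t l i -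
              H t k i * lineDeriv ℂ (fun s => H s l i) t (Pi.single i 1)) * H t :=
  stmt_7_general N i U hU H hdiff horth hprop
end
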